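/- Let 𝕂 = ℚ_{>0}, and let x, y ∈ 𝕂^n satisfy (u_i + x_i)(1/u_{i+1} + 1/x_{i+1}) = (u_i + y_i)(1/u_{i+1} + 1/y_{i+1}) for all i ∈ {1,…,n−1}, and y_1 y_2 ⋯ y_n · x_1 x_2 ⋯ x_n = (u_1 u_2 ⋯ u_n)^2. Then y = f_u(x). -/

import Mathlib

/- Setting: the semifield `K = ℚ_{>0}` of positive rationals, a fixed `u ∈ K^n`,
all `n`-tuples extended `n`-periodically to families indexed by `ℤ`. -/

/-- The semifield of positive rational numbers. -/
abbrev QPos : Type := {q : ℚ // 0 < q}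

/-- The nonempty sum `f 0 + f 1 + ⋯ + f r`. -/
def addSum (f : ℕ → QPos) : ℕ → QPos
  | 0 => f 0
  | r + 1 => addSum f r + f (r + 1)

/-- The element `t_{r,j} = Σ_{k=0}^{r} (∏_{i=1}^{k} x_{j+i}) · (∏_{i=k+1}^{r} u_{j+i})`. -/
def tpoly (u x : ℤ → QPos) (r : ℕ) (j : ℤ) : QPos :=
  addSum
    (fun k => (∏ i ∈ Finset.Icc 1 k, x (j + i)) * ∏ i ∈ Finset.Icc (k + 1) r, u (j + i)) r

open Fin.IntCast in
/-- The `n`-periodic extension of an `n`-tuple to a family indexed by `ℤ`. -/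
def extend {n : ℕ} [NeZero n] (v : Fin n → QPos) : ℤ → QPos := fun i => v (i : Fin n)

/-- The map `f_u : K^n → K^n`, sending `x` to the `n`-tuple `y` with
`y_i = u_i · (u_{i-1} t_{n-1,i-1}) / (x_{i+1} t_{n-1,i+1})`. -/
def fu {n : ℕ} [NeZero n] (u : Fin n → QPos) (x : Fin n → QPos) : Fin n → QPos :=
  fun i =>
    u i * (extend u ((i : ℤ) - 1) * tpoly (extend u) (extend x) (n - 1) ((i : ℤ) - 1)) /
      (extend x ((i : ℤ) + 1) * tpoly (extend u) (extend x) (n - 1) ((i : ℤ) + 1))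

/-! Write `T_j = t_{n-1,j}`. Peeling off the last, resp. the first, term of `t` gives two
recursions, and together with periodicity they show that `x_{j+1} T_{j+1} - u_j T_j` equals
`∏ x - ∏ u` for every `j`. Subtracting this at `j - 1` gives the three-term recurrence
`x_{j+1} T_{j+1} + u_{j-1} T_{j-1} = (u_j + x_j) T_j`, which is exactly what makes `f_u(x)`
satisfy the relations `(u_i + x_i)(1/u_{i+1} + 1/x_{i+1}) = (u_i + y_i)(1/u_{i+1} + 1/y_{i+1})`;
the factors `T` cancel in `∏ f_u(x)`, so `∏ f_u(x) · ∏ x = (∏ u)^2`.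
Conversely, each relation makes `y_{i+1}` an increasing function of `y_i`, so two solutions
are comparable coordinatewise, and equal products then force them to agree. -/

open Finset

section Periodic
open Fin.CommRing

variable {M : Type*} {n : ℕ} [NeZero n]

theorem Function.Periodic.apply_intCast_fin {f : ℤ → M} (hf : Function.Periodic f n) (i : ℤ) :
    f ((i : Fin n) : ℤ) = f i := by
  have hmod : (((i : Fin n) : ℕ) : ℤ) = i % n := by
    rw [Fin.val_intCast, Int.toNat_of_nonneg (Int.emod_nonneg _ (by exact_mod_cast NeZero.ne n))]
  rw [hmod, Int.emod_def, mul_comm]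
  exact hf.sub_int_mul_eq _

theorem Function.Periodic.prod_fin_add [CommMonoid M] {f : ℤ → M} (hf : Function.Periodic f n)
    (c : ℤ) : ∏ i : Fin n, f (i + c) = ∏ i : Fin n, f i := by
  have hshift : ∀ i : Fin n, f (i + c) = f ((i + (c : Fin n) : Fin n) : ℤ) := fun i => by
    rw [← hf.apply_intCast_fin (i + c)]
    push_cast [Fin.cast_val_eq_self]
    rfl
  simp_rw [hshift]
  exact Equiv.prod_comp (Equiv.addRight (c : Fin n)) fun i => f i

theorem periodic_extend (v : Fin n → QPos) : Function.Periodic (extend v) n := fun i => by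
  simp [extend]

theorem extend_coe (v : Fin n → QPos) (i : Fin n) : extend v i = v i := by
  simp [extend, Fin.cast_val_eq_self]

end Periodic

theorem Finset.prod_Icc_succ_succ {M : Type*} [CommMonoid M] (g : ℕ → M) (a b : ℕ) :
    ∏ i ∈ Icc (a + 1) (b + 1), g i = ∏ i ∈ Icc a b, g (i + 1) := by
  rw [← Ico_add_one_right_eq_Icc, ← Ico_add_one_right_eq_Icc, prod_Ico_add']

theorem Finset.Icc_one_eq_Ioc_zero (r : ℕ) : Icc 1 r = Ioc 0 r := Icc_add_one_left_eq_Ioc 0 r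

theorem Finset.mul_prod_Icc_one {M : Type*} [CommMonoid M] (g : ℕ → M) (r : ℕ) :
    g 0 * ∏ i ∈ Icc 1 r, g i = ∏ i ∈ range (r + 1), g i := by
  rw [Icc_one_eq_Ioc_zero, mul_prod_Ioc_eq_prod_Icc r.zero_le, ← Ico_add_one_right_eq_Icc,
    Nat.Ico_zero_eq_range]

theorem Finset.prod_Icc_one_succ {M : Type*} [CommMonoid M] (g : ℕ → M) (k : ℕ) :
    ∏ i ∈ Icc 1 (k + 1), g i = g 1 * ∏ i ∈ Icc 1 k, g (i + 1) := by
  rw [Icc_one_eq_Ioc_zero k, mul_prod_Ioc_eq_prod_Icc (f := fun i => g (i + 1)) k.zero_le]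
  exact prod_Icc_succ_succ g 0 k

theorem addSum_congr {f g : ℕ → QPos} {r : ℕ} (h : ∀ k ≤ r, f k = g k) :
    addSum f r = addSum g r := by
  induction r with
  | zero => exact h 0 le_rfl
  | succ r ih => rw [addSum, addSum, ih fun k hk => h k (hk.trans r.le_succ), h _ le_rfl]

theorem addSum_mul (f : ℕ → QPos) (c : QPos) (r : ℕ) :
    addSum (fun k => f k * c) r = addSum f r * c := by
  induction r with
  | zero => rfl
  | succ r ih => rw [addSum, addSum, ih, add_mul]

theorem mul_addSum (c : QPos) (f : ℕ → QPos) (r : ℕ) :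
    addSum (fun k => c * f k) r = c * addSum f r := by
  induction r with
  | zero => rfl
  | succ r ih => rw [addSum, addSum, ih, mul_add]

theorem addSum_succ' (f : ℕ → QPos) (r : ℕ) :
    addSum f (r + 1) = f 0 + addSum (fun k => f (k + 1)) r := by
  induction r with
  | zero => rfl
  | succ r ih => rw [addSum, ih, addSum, add_assoc]

theorem tpoly_succ (u x : ℤ → QPos) (r : ℕ) (j : ℤ) :
    tpoly u x (r + 1) j =
      tpoly u x r j * u (j + (r + 1 : ℕ)) + ∏ i ∈ Icc 1 (r + 1), x (j + i) := by
  rw [tpoly, addSum, tpoly, ← addSum_mul]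
  congr 1
  · refine addSum_congr fun k hk => ?_
    rw [prod_Icc_succ_top (Nat.succ_le_succ hk), mul_assoc]
  · rw [Icc_eq_empty_of_lt (Nat.lt_succ_self _), prod_empty, mul_one]

theorem tpoly_succ' (u x : ℤ → QPos) (r : ℕ) (j : ℤ) :
    tpoly u x (r + 1) j =
      ∏ i ∈ Icc 1 (r + 1), u (j + i) + x (j + 1) * tpoly u x r (j + 1) := by
  rw [tpoly, addSum_succ', tpoly, ← mul_addSum]
  congr 1
  · rw [Icc_eq_empty_of_lt zero_lt_one, prod_empty, one_mul]
  · refine addSum_congr fun k _ => ?_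
    rw [prod_Icc_one_succ, prod_Icc_succ_succ, mul_assoc]
    simp only [Nat.cast_add, Nat.cast_one, add_right_comm j, add_assoc]

theorem tpoly_periodic {u x : ℤ → QPos} {c : ℤ} (hu : Function.Periodic u c)
    (hx : Function.Periodic x c) (r : ℕ) : Function.Periodic (tpoly u x r) c := fun j => by
  simp only [tpoly, add_right_comm j c, hu _, hx _]

theorem tpoly_balance (u x : ℤ → QPos) (r : ℕ) (j : ℤ) (hu : u (j + (r + 2 : ℕ)) = u j) :
    x (j + 1) * tpoly u x (r + 1) (j + 1) + ∏ i ∈ range (r + 2), u (j + i) =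
      ∏ i ∈ range (r + 2), x (j + 1 + i) + u j * tpoly u x (r + 1) j := by
  rw [← mul_prod_Icc_one (fun i : ℕ => u (j + i)),
    ← mul_prod_Icc_one (fun i : ℕ => x (j + 1 + i)), tpoly_succ u x r (j + 1), tpoly_succ' u x r j,
    show j + 1 + ((r + 1 : ℕ) : ℤ) = j + (r + 2 : ℕ) by push_cast; ring, hu, Nat.cast_zero,
    add_zero, add_zero]
  apply Subtype.ext
  simp only [Positive.coe_add, Positive.val_mul]
  ring

section Cyclic

variable {n : ℕ} [NeZero n]

theorem prod_range_extend (v : Fin n → QPos) (j : ℤ) :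
    ∏ i ∈ range n, extend v (j + i) = ∏ i, v i := by
  rw [← Fin.prod_univ_eq_prod_range (fun i : ℕ => extend v (j + i)) n]
  simp_rw [add_comm j]
  rw [(periodic_extend v).prod_fin_add j]
  simp only [extend_coe]

theorem tpoly_extend_balance {r : ℕ} (u x : Fin (r + 2) → QPos) (j : ℤ) :
    extend x (j + 1) * tpoly (extend u) (extend x) (r + 1) (j + 1) + ∏ i, u i =
      ∏ i, x i + extend u j * tpoly (extend u) (extend x) (r + 1) j := by
  rw [← prod_range_extend u j, ← prod_range_extend x (j + 1)]
  exact tpoly_balance _ _ r j (periodic_extend u j)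

theorem tpoly_extend_recurrence {r : ℕ} (u x : Fin (r + 2) → QPos) (j : ℤ) :
    extend x (j + 1) * tpoly (extend u) (extend x) (r + 1) (j + 1) +
        extend u (j - 1) * tpoly (extend u) (extend x) (r + 1) (j - 1) =
      (extend u j + extend x j) * tpoly (extend u) (extend x) (r + 1) j := by
  have h₀ := congrArg Subtype.val (tpoly_extend_balance u x j)
  have h₁ := congrArg Subtype.val (tpoly_extend_balance u x (j - 1))
  rw [sub_add_cancel] at h₁
  apply Subtype.ext
  simp only [Positive.coe_add, Positive.val_mul] at h₀ h₁ ⊢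
  linear_combination h₀ - h₁

end Cyclic

def linkFactor (u v : ℤ → QPos) (i : ℤ) : QPos :=
  (u i + v i) * ((u (i + 1))⁻¹ + (v (i + 1))⁻¹)

theorem linkFactor_eq_of_recurrence (u x T : ℤ → QPos)
    (hT : ∀ j, x (j + 1) * T (j + 1) + u (j - 1) * T (j - 1) = (u j + x j) * T j) (j : ℤ) :
    linkFactor u (fun i => u i * (u (i - 1) * T (i - 1)) / (x (i + 1) * T (i + 1))) j =
      linkFactor u x j := by
  have h₀ := congrArg Subtype.val (hT j)
  have h₁ := congrArg Subtype.val (hT (j + 1))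
  rw [add_sub_cancel_right] at h₁
  apply Subtype.ext
  simp only [linkFactor, add_sub_cancel_right, Positive.coe_add, Positive.val_mul, div_eq_mul_inv,
    Positive.coe_inv] at h₀ h₁ ⊢
  have hu₀ : (0 : ℚ) < u j := (u j).2
  have hu₁ : (0 : ℚ) < u (j + 1) := (u (j + 1)).2
  have hx₁ : (0 : ℚ) < x (j + 1) := (x (j + 1)).2
  have hT₀ : (0 : ℚ) < T j := (T j).2
  have hT₁ : (0 : ℚ) < T (j + 1) := (T (j + 1)).2
  field_simp
  linear_combination ((u j : ℚ) * T j + x (j + 1 + 1) * T (j + 1 + 1)) * h₀ +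
    (((u j : ℚ) + x j) * T j) * h₁

section Fu

variable {n : ℕ} [NeZero n] (u x : Fin n → QPos)

theorem extend_fu :
    extend (fu u x) = fun i =>
      extend u i * (extend u (i - 1) * tpoly (extend u) (extend x) (n - 1) (i - 1)) /
        (extend x (i + 1) * tpoly (extend u) (extend x) (n - 1) (i + 1)) := by
  have hu := periodic_extend u
  have hT := tpoly_periodic hu (periodic_extend x) (n - 1)
  have hF := (hu.mul ((hu.sub_const 1).mul (hT.sub_const 1))).div
    (((periodic_extend x).add_const 1).mul (hT.add_const 1))
  funext i
  refine Eq.trans ?_ (hF.apply_intCast_fin i)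
  rw [extend, fu, ← extend_coe u]
  rfl

theorem prod_fu_mul_prod : (∏ i, fu u x i) * ∏ i, x i = (∏ i, u i) ^ 2 := by
  have hu := periodic_extend u
  have hT := tpoly_periodic hu (periodic_extend x) (n - 1)
  have hfu (i : Fin n) : fu u x i = extend (fu u x) i := (extend_coe _ i).symm
  simp_rw [hfu, extend_fu, prod_div_distrib, prod_mul_distrib, sub_eq_add_neg, hu.prod_fin_add,
    hT.prod_fin_add, (periodic_extend x).prod_fin_add, extend_coe]
  rw [mul_div_assoc, mul_div_mul_right_eq_div, mul_assoc, div_mul_cancel, sq]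

end Fu

theorem linkFactor_extend_fu {r : ℕ} (u x : Fin (r + 2) → QPos) (j : ℤ) :
    linkFactor (extend u) (extend (fu u x)) j = linkFactor (extend u) (extend x) j := by
  rw [extend_fu]
  exact linkFactor_eq_of_recurrence _ _ _ (tpoly_extend_recurrence u x) j

theorem le_of_add_mul_inv_add_inv_eq {u w a a' b b' : QPos}
    (h : (u + a) * (w⁻¹ + b⁻¹) = (u + a') * (w⁻¹ + b'⁻¹)) (ha : a ≤ a') : b ≤ b' := by
  by_contra! hb
  have hlt : w⁻¹ + b⁻¹ < w⁻¹ + b'⁻¹ := add_lt_add_right (inv_lt_inv' hb) _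
  exact h.not_lt (mul_lt_mul_of_le_of_lt (add_le_add_right ha u) hlt)

section Uniqueness

variable {n : ℕ} [NeZero n] {u y z : Fin n → QPos}

theorem le_of_linkFactor_eq
    (h : ∀ i : ℤ, 0 ≤ i → i + 1 < n →
      linkFactor (extend u) (extend y) i = linkFactor (extend u) (extend z) i)
    (h₀ : y 0 ≤ z 0) (i : Fin n) : y i ≤ z i := by
  suffices ∀ k : ℕ, k < n → extend y k ≤ extend z k by
    simpa only [extend_coe] using this i i.isLt
  intro k
  induction k with
  | zero =>
    rw [← extend_coe y, ← extend_coe z] at h₀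
    exact fun _ => by simpa using h₀
  | succ k ih =>
    intro hk
    exact_mod_cast le_of_add_mul_inv_add_inv_eq (h k k.cast_nonneg (by omega)) (ih (by omega))

theorem eq_of_linkFactor_eq_of_prod_eq
    (h : ∀ i : ℤ, 0 ≤ i → i + 1 < n →
      linkFactor (extend u) (extend y) i = linkFactor (extend u) (extend z) i)
    (hprod : ∏ i, y i = ∏ i, z i) : y = z := by
  wlog h₀ : y 0 ≤ z 0 generalizing y z
  · exact (this (fun i hi hin => (h i hi hin).symm) hprod.symm (le_of_not_ge h₀)).symm
  have hle := le_of_linkFactor_eq h h₀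
  funext i
  exact (prod_eq_prod_iff_of_le fun i _ => hle i).1 hprod i (mem_univ i)

end Uniqueness

/-- Proposition: over `K = ℚ_{>0}`, if `x, y ∈ K^n` satisfy
`(u_i + x_i)(1/u_{i+1} + 1/x_{i+1}) = (u_i + y_i)(1/u_{i+1} + 1/y_{i+1})` for all
`i ∈ {1,…,n−1}` (here indexed by `0 ≤ i`, `i+1 < n`), and
`y_1 ⋯ y_n · x_1 ⋯ x_n = (u_1 ⋯ u_n)^2`, then `y = f_u(x)`. -/
theorem fu_unique_posrat (n : ℕ) [NeZero n] (u x y : Fin n → QPos)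
    (h1 : ∀ i : ℤ, 0 ≤ i → i + 1 < n →
      (extend u i + extend x i) * ((extend u (i + 1))⁻¹ + (extend x (i + 1))⁻¹) =
        (extend u i + extend y i) * ((extend u (i + 1))⁻¹ + (extend y (i + 1))⁻¹))
    (h2 : (∏ i, y i) * ∏ i, x i = (∏ i, u i) ^ 2) :
    y = fu u x := by
  have hlink : ∀ i : ℤ, 0 ≤ i → i + 1 < n →
      linkFactor (extend u) (extend y) i = linkFactor (extend u) (extend (fu u x)) i := by
    intro i hi hin
    obtain ⟨r, rfl⟩ : ∃ r, n = r + 2 := ⟨n - 2, by omega⟩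
    exact (h1 i hi hin).symm.trans (linkFactor_extend_fu u x i).symm
  have hprod : ∏ i, y i = ∏ i, fu u x i :=
    mul_right_cancel (h2.trans (prod_fu_mul_prod u x).symm)
  exact eq_of_linkFactor_eq_of_prod_eq hlink hprod
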